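/- arXiv:2407.12333 — 3 statements merged into one kernel-verified Lean document; each statement's English description precedes it below -/
import Mathlib

section
/- Let n ≥ q ≥ 1 and let L: ℝⁿ → ℝ^q be a linear map of rank q − 1. Then there exist a linear isomorphism Φ of ℝⁿ, a generalized positive permutation matrix C ∈ G_gp ⊂ GL(q, ℝ), an integer l with 0 ≤ l ≤ q − 1, and signs δ₁, …, δ_l ∈ {−1, +1} such that C · (L ∘ Φ) is the linear map (x₁, …, xₙ) ↦ (x₁, …, x_{q−1}, Σ_{j=1}^{l} δⱼ xⱼ). -/
/-!
The range of `L` is a hyperplane, the kernel of a nonzero covector `v`. A permutation of the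
coordinates moving the support of `v` to the positions `0, …, l - 1` and `q - 1`, followed by
rescaling each coordinate by `|vᵢ|`, carries this hyperplane to
`{y | y_{q-1} = ∑_{j<l} δⱼ yⱼ}` with signs `δⱼ`, which is the range of the normal form.
Two linear maps with the same range differ by an automorphism of the source: split the source
as kernel ⊕ complement, the complements map isomorphically onto the common range and the kernels
have the same dimension.
-/

/-- A generalized positive permutation matrix: a product of a diagonal matrix with
strictly positive diagonal entries and a permutation matrix. -/
def IsGenPosPerm {q : ℕ} (C : Matrix (Fin q) (Fin q) ℝ) : Prop :=
  ∃ (d : Fin q → ℝ) (σ : Equiv.Perm (Fin q)),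
    (∀ i, 0 < d i) ∧ C = Matrix.diagonal d * σ.permMatrix ℝ

open Matrix LinearMap Module

section RangeEq

variable {K V W : Type*} [Field K] [AddCommGroup V] [Module K V] [AddCommGroup W] [Module K W]

theorem LinearMap.exists_linearEquiv_prod_ker_range (f : V →ₗ[K] W) :
    ∃ θ : V ≃ₗ[K] ker f × range f, ∀ x, ((θ x).2 : W) = f x := by
  obtain ⟨p, hp⟩ := (ker f).exists_isCompl
  refine ⟨(Submodule.prodEquivOfIsCompl _ _ hp).symm ≪≫ₗ (LinearEquiv.refl K _).prodCongr
    ((Submodule.quotientEquivOfIsCompl _ _ hp).symm ≪≫ₗ f.quotKerEquivRange), fun x => ?_⟩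
  obtain ⟨⟨a, b⟩, rfl⟩ := (Submodule.prodEquivOfIsCompl _ _ hp).surjective x
  simp

theorem LinearMap.exists_linearEquiv_comp_eq_of_range_eq [FiniteDimensional K V]
    {f g : V →ₗ[K] W} (h : range f = range g) : ∃ e : V ≃ₗ[K] V, ∀ x, f (e x) = g x := by
  obtain ⟨θf, hθf⟩ := f.exists_linearEquiv_prod_ker_range
  obtain ⟨θg, hθg⟩ := g.exists_linearEquiv_prod_ker_range
  have hker : finrank K (ker g) = finrank K (ker f) := by
    have := f.finrank_range_add_finrank_ker
    have := g.finrank_range_add_finrank_ker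
    rw [h] at *
    omega
  refine ⟨θg ≪≫ₗ (LinearEquiv.ofFinrankEq _ _ hker).prodCongr (LinearEquiv.ofEq _ _ h.symm) ≪≫ₗ
    θf.symm, fun x => ?_⟩
  rw [← hθf, LinearEquiv.trans_apply, LinearEquiv.apply_symm_apply, ← hθg]
  rfl

end RangeEq

theorem Equiv.Perm.exists_apply_mem_iff_of_card_eq {α : Type*} [Fintype α] [DecidableEq α]
    {s t : Finset α} (h : t.card = s.card) : ∃ σ : Perm α, ∀ i, σ i ∈ s ↔ i ∈ t := by
  let e : {i // i ∈ t} ≃ {i // i ∈ s} := Fintype.equivOfCardEq (by simpa using h)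
  refine ⟨e.extendSubtype, fun i => ⟨fun hi => ?_, e.extendSubtype_mem i⟩⟩
  by_contra hit
  exact e.extendSubtype_not_mem i hit hi

theorem exists_perm_apply_ne_zero_iff_eq_last_or_lt {M : Type*} [Zero M] {k : ℕ}
    {v : Fin (k + 1) → M} (hv : v ≠ 0) : ∃ (σ : Equiv.Perm (Fin (k + 1))) (l : ℕ), l ≤ k ∧
      ∀ i, v (σ i) ≠ 0 ↔ i = Fin.last k ∨ (i : ℕ) < l := by
  classical
  set s := Finset.univ.filter (fun i => v i ≠ 0)
  have hs : 0 < s.card := Finset.card_pos.mpr <| by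
    obtain ⟨i, hi⟩ := Function.ne_iff.mp hv
    exact ⟨i, by simpa [s] using hi⟩
  have hsk : s.card ≤ k + 1 := by simpa using Finset.card_le_univ s
  set l := s.card - 1
  obtain ⟨σ, hσ⟩ := Equiv.Perm.exists_apply_mem_iff_of_card_eq
    (s := s) (t := insert (Fin.last k) (Finset.Iio ⟨l, by omega⟩)) <| by
      rw [Finset.card_insert_of_notMem (by simp [Fin.lt_def]; omega), Fin.card_Iio]
      simp only [l]
      omega
  refine ⟨σ, l, by omega, fun i => ?_⟩
  simpa [s, Fin.lt_def] using hσ i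

theorem exists_pos_sign_mul_eq {ι : Type*} (v : ι → ℝ) :
    ∃ d : ι → ℝ, (∀ i, 0 < d i) ∧ ∀ i, (SignType.sign (v i) : ℝ) * d i = v i := by
  classical
  refine ⟨fun i => if v i = 0 then 1 else |v i|, fun i => ?_, fun i => ?_⟩ <;>
    by_cases h : v i = 0 <;> simp [h]

theorem mulVec_diagonal_mul_permMatrix {R n : Type*} [CommRing R] [Fintype n] [DecidableEq n]
    (d : n → R) (σ : Equiv.Perm n) (y : n → R) :
    (diagonal d * σ.permMatrix R) *ᵥ y = fun i => d i * y (σ i) := by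
  rw [← mulVec_mulVec, permMatrix_mulVec]
  ext i
  simp [mulVec_diagonal]

theorem dotProduct_eq_sign_dotProduct_mulVec {ι : Type*} [Fintype ι] [DecidableEq ι]
    {v d : ι → ℝ} {σ : Equiv.Perm ι} (h : ∀ i, (SignType.sign (v (σ i)) : ℝ) * d i = v (σ i))
    (y : ι → ℝ) :
    v ⬝ᵥ y = (fun i => (SignType.sign (v (σ i)) : ℝ)) ⬝ᵥ ((diagonal d * σ.permMatrix ℝ) *ᵥ y) :=
  calc v ⬝ᵥ y = ∑ i, v (σ i) * y (σ i) := (Equiv.sum_comp σ fun i => v i * y i).symm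
    _ = _ := Finset.sum_congr rfl fun i _ => by
      rw [mulVec_diagonal_mul_permMatrix, ← mul_assoc, h]

theorem IsGenPosPerm.mulVec_injective {q : ℕ} {C : Matrix (Fin q) (Fin q) ℝ}
    (hC : IsGenPosPerm C) : Function.Injective C.mulVec := by
  obtain ⟨d, σ, hd, rfl⟩ := hC
  intro y z h
  rw [mulVec_diagonal_mul_permMatrix, mulVec_diagonal_mul_permMatrix] at h
  funext j
  simpa [(hd _).ne'] using congrFun h (σ.symm j)

theorem Fin.sum_castLE_eq_sum_of_eq_zero {M : Type*} [AddCommMonoid M] {l k : ℕ} (h : l ≤ k)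
    {f : Fin k → M} (hf : ∀ i : Fin k, l ≤ (i : ℕ) → f i = 0) :
    ∑ j : Fin l, f (Fin.castLE h j) = ∑ i, f i := by
  rw [show ∑ j : Fin l, f (Fin.castLE h j) = ∑ i ∈ Finset.univ.map (Fin.castLEEmb h), f i by
    rw [Finset.sum_map]; rfl]
  refine Finset.sum_subset (Finset.subset_univ _) fun i _ hi => hf i ?_
  by_contra hil
  exact hi (Finset.mem_map.2 ⟨⟨i, by omega⟩, Finset.mem_univ _, rfl⟩)

section NormalForm

variable {K : Type*} [CommSemiring K] {n k : ℕ}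

-- The paper's `(x₁, …, x_{q-1}, ∑_{j ≤ l} δⱼ xⱼ)`, with `δ` padded by zeros to length `k = q - 1`.
def normalForm (hkn : k ≤ n) (ε : Fin k → K) : (Fin n → K) →ₗ[K] (Fin (k + 1) → K) where
  toFun x := Fin.snoc (x ∘ Fin.castLE hkn) (ε ⬝ᵥ (x ∘ Fin.castLE hkn))
  map_add' x y := by
    ext i
    refine Fin.lastCases ?_ (fun i => ?_) i <;> simp [Pi.add_comp, dotProduct_add]
  map_smul' c x := by
    ext i
    refine Fin.lastCases ?_ (fun i => ?_) i <;> simp [Pi.smul_comp, dotProduct_smul]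

variable (hkn : k ≤ n) (ε : Fin k → K)

@[simp]
theorem normalForm_apply_castSucc (x : Fin n → K) (i : Fin k) :
    normalForm hkn ε x i.castSucc = x (i.castLE hkn) := by
  simp [normalForm]

@[simp]
theorem normalForm_apply_last (x : Fin n → K) :
    normalForm hkn ε x (Fin.last k) = ε ⬝ᵥ (x ∘ Fin.castLE hkn) := by
  simp [normalForm]

theorem mem_range_normalForm {y : Fin (k + 1) → K} (hy : y (Fin.last k) = ε ⬝ᵥ Fin.init y) :
    y ∈ range (normalForm hkn ε) := by
  obtain ⟨x, hx⟩ := funLeft_surjective_of_injective K K _ (Fin.castLE_injective hkn) (Fin.init y)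
  refine ⟨x, ?_⟩
  ext i
  refine Fin.lastCases ?_ (fun i => ?_) i
  · simp [hy, ← hx, funLeft]
  · simpa [Fin.init] using congrFun hx i

theorem finrank_range_normalForm_le [StrongRankCondition K] :
    finrank K (range (normalForm hkn ε)) ≤ k := by
  have hfactor : normalForm hkn ε = normalForm le_rfl ε ∘ₗ funLeft K K (Fin.castLE hkn) := by
    ext x i
    refine Fin.lastCases ?_ (fun i => ?_) i <;> simp [funLeft, Function.comp_def]
  calc finrank K (range (normalForm hkn ε))
      ≤ finrank K (range (normalForm le_rfl ε)) :=
        Submodule.finrank_mono (hfactor ▸ range_comp_le_range _ _)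
    _ ≤ finrank K (Fin k → K) := finrank_range_le _
    _ = k := by simp

end NormalForm

theorem LinearMap.exists_ne_zero_dotProduct_eq_zero_of_finrank_range_lt {K V ι : Type*}
    [Field K] [AddCommGroup V] [Module K V] [Fintype ι] [DecidableEq ι] (L : V →ₗ[K] (ι → K))
    (hL : finrank K (range L) < Fintype.card ι) : ∃ v : ι → K, v ≠ 0 ∧ ∀ x, v ⬝ᵥ L x = 0 := by
  have hlt : range L < ⊤ := by
    refine lt_top_iff_ne_top.mpr fun htop => ?_
    rw [htop, finrank_top, finrank_fintype_fun_eq_card] at hL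
    exact lt_irrefl _ hL
  obtain ⟨f, hf0, hf⟩ := Submodule.exists_dual_map_eq_bot_of_lt_top hlt inferInstance
  obtain ⟨v, rfl⟩ := (dotProductEquiv K ι).surjective f
  refine ⟨v, by simpa using hf0, fun x => ?_⟩
  rw [← Submodule.mem_bot K, ← hf]
  exact Submodule.mem_map_of_mem (mem_range_self L x)

theorem exists_isGenPosPerm_normalForm {k : ℕ} {v : Fin (k + 1) → ℝ} (hv : v ≠ 0) :
    ∃ (C : Matrix (Fin (k + 1)) (Fin (k + 1)) ℝ) (l : ℕ) (ε : Fin k → ℝ),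
      IsGenPosPerm C ∧ l ≤ k ∧ (∀ i : Fin k, (i : ℕ) < l → ε i = 1 ∨ ε i = -1) ∧
      (∀ i : Fin k, l ≤ (i : ℕ) → ε i = 0) ∧
      ∀ y, v ⬝ᵥ y = 0 → (C *ᵥ y) (Fin.last k) = ε ⬝ᵥ Fin.init (C *ᵥ y) := by
  obtain ⟨σ, l, hlk, hsupp⟩ := exists_perm_apply_ne_zero_iff_eq_last_or_lt hv
  obtain ⟨d, hd, hsd⟩ := exists_pos_sign_mul_eq fun i => v (σ i)
  set s : Fin (k + 1) → ℝ := fun i => SignType.sign (v (σ i))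
  have hs : ∀ i, v (σ i) ≠ 0 → s i = 1 ∨ s i = -1 := fun i hi => by
    rcases hi.lt_or_gt with h | h <;> simp [s, h]
  set c := s (Fin.last k)
  have hc : c = 1 ∨ c = -1 := hs _ ((hsupp _).2 (Or.inl rfl))
  refine ⟨diagonal d * σ.permMatrix ℝ, l, fun j => -(c * s j.castSucc), ⟨d, σ, hd, rfl⟩, hlk,
    fun j hj => ?_, fun j hj => ?_, fun y hy => ?_⟩
  · rcases hc with hc | hc <;> rcases hs j.castSucc ((hsupp _).2 (Or.inr hj)) with h | h <;>
      simp [hc, h]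
  · have : v (σ j.castSucc) = 0 := by
      by_contra h
      rcases (hsupp _).1 h with h | h
      · exact Fin.castSucc_ne_last j h
      · simp at h; omega
    simp [s, this]
  set z := (diagonal d * σ.permMatrix ℝ) *ᵥ y
  have key : v ⬝ᵥ y = c * (z (Fin.last k) - (fun j => -(c * s j.castSucc)) ⬝ᵥ Fin.init z) := by
    have hcc : c * c = 1 := by rcases hc with h | h <;> simp [h]
    rw [dotProduct_eq_sign_dotProduct_mulVec hsd]
    simp only [dotProduct, Fin.sum_univ_castSucc, Fin.init, neg_mul, Finset.sum_neg_distrib,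
      sub_neg_eq_add, mul_add, Finset.mul_sum, ← mul_assoc, hcc, one_mul]
    ring
  rw [hy, eq_comm, mul_eq_zero, sub_eq_zero] at key
  exact key.resolve_left (by rcases hc with h | h <;> simp [h])

theorem stmt9 (n q : ℕ) (hq : 1 ≤ q) (hqn : q ≤ n)
    (L : (Fin n → ℝ) →ₗ[ℝ] (Fin q → ℝ))
    (hrank : Module.finrank ℝ (LinearMap.range L) = q - 1) :
    ∃ (Φ : (Fin n → ℝ) ≃ₗ[ℝ] (Fin n → ℝ)) (C : Matrix (Fin q) (Fin q) ℝ)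
      (l : ℕ) (hl : l ≤ q - 1) (δ : Fin l → ℝ),
      IsGenPosPerm C ∧ (∀ j, δ j = 1 ∨ δ j = -1) ∧
      ∀ (x : Fin n → ℝ) (i : Fin q),
        C.mulVec (L (Φ x)) i =
          if (i : ℕ) < q - 1 then x (Fin.castLE hqn i)
          else ∑ j : Fin l, δ j * x (Fin.castLE (by omega) j) := by
  obtain ⟨k, rfl⟩ : ∃ k, q = k + 1 := ⟨q - 1, by omega⟩
  obtain ⟨v, hv0, hvL⟩ := L.exists_ne_zero_dotProduct_eq_zero_of_finrank_range_lt (by simp [hrank])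
  obtain ⟨C, l, ε, hC, hlk, hε_sign, hε_zero, hv⟩ := exists_isGenPosPerm_normalForm hv0
  have hkn : k ≤ n := by omega
  have hrange : range (C.mulVecLin ∘ₗ L) = range (normalForm hkn ε) := by
    refine Submodule.eq_of_le_of_finrank_le ?_ ?_
    · rintro _ ⟨x, rfl⟩
      exact mem_range_normalForm hkn ε (hv _ (hvL x))
    · rw [range_comp, ← (Submodule.equivMapOfInjective _ hC.mulVec_injective _).finrank_eq, hrank]
      exact finrank_range_normalForm_le hkn ε
  obtain ⟨Φ, hΦ⟩ := exists_linearEquiv_comp_eq_of_range_eq hrange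
  refine ⟨Φ, C, l, by omega, fun j => ε (Fin.castLE hlk j), hC, fun j => hε_sign _ j.2,
    fun x i => ?_⟩
  rw [← mulVecLin_apply, ← LinearMap.comp_apply, hΦ x]
  refine Fin.lastCases ?_ (fun i => ?_) i
  · rw [if_neg (by simp), normalForm_apply_last, dotProduct,
      ← Fin.sum_castLE_eq_sum_of_eq_zero hlk fun i hi => by simp [hε_zero i hi]]
    rfl
  · simp
end

section
/- Fix an integer M ≥ 2, y ∈ ℝ^{M−1}, and a real number F. With f₁, …, f_M defined as in DTLZ1 (f₁ = 0.5(1+F)∏_{i=1}^{M−1} yᵢ, and f_m = 0.5(1+F)(∏_{i=1}^{M−m} yᵢ)(1 − y_{M−m+1}) for 2 ≤ m ≤ M), define g = 1 − f_M/0.6 − Σ_{i=1}^{M−1} fᵢ/0.5. Then g = 1 − (5/6)(1+F)(1 + y₁/5). -/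
/-!
Write `P k = ∏_{i=1}^k yᵢ` and `c = (1 + F) / 2`. Since `P k (1 - y_{k+1}) = P k - P (k+1)`, the DTLZ1
objectives telescope: with `g m = c P (M - m)` one has `f₁ = g 1` and `f_m = g m - g (m-1)` for
`2 ≤ m ≤ M`. Hence `Σ_{i<M} fᵢ = g (M-1) = c y₁` and `f_M = c (1 - y₁)`, and the claim is arithmetic.
-/

open Finset

theorem Finset.sum_Icc_one_eq_of_eq_sub {G : Type*} [AddCommGroup G] {f g : ℕ → G} {n : ℕ}
    (hn : 1 ≤ n) (h₁ : f 1 = g 1) (hsub : ∀ i, 2 ≤ i → i ≤ n → f i = g i - g (i - 1)) :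
    ∑ i ∈ Icc 1 n, f i = g n := by
  induction n, hn using Nat.le_induction with
  | base => simpa using h₁
  | succ n hn ih =>
    rw [sum_Icc_succ_top (by omega), ih fun i hi hin => hsub i hi (by omega),
      hsub (n + 1) (by omega) le_rfl, Nat.add_sub_cancel]
    abel

theorem Finset.prod_Icc_one_mul_one_sub {R : Type*} [CommRing R] (y : ℕ → R) (k : ℕ) :
    (∏ i ∈ Icc 1 k, y i) * (1 - y (k + 1)) = ∏ i ∈ Icc 1 k, y i - ∏ i ∈ Icc 1 (k + 1), y i := by
  rw [prod_Icc_succ_top (by omega)]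
  ring

theorem stmt14 (M : ℕ) (hM : 2 ≤ M) (y : ℕ → ℝ) (F : ℝ) (f : ℕ → ℝ)
    (hf : ∀ m, f m =
      if m = 1 then 0.5 * (1 + F) * ∏ i ∈ Finset.Icc 1 (M - 1), y i
      else 0.5 * (1 + F) * (∏ i ∈ Finset.Icc 1 (M - m), y i) * (1 - y (M - m + 1))) :
    1 - f M / 0.6 - ∑ i ∈ Finset.Icc 1 (M - 1), f i / 0.5 =
      1 - 5 / 6 * (1 + F) * (1 + y 1 / 5) := by
  let g : ℕ → ℝ := fun m => 0.5 * (1 + F) * ∏ i ∈ Icc 1 (M - m), y i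
  have hf₁ : f 1 = g 1 := by simp [hf, g]
  have hsub : ∀ m, 2 ≤ m → m ≤ M → f m = g m - g (m - 1) := by
    intro m hm hmM
    rw [hf m, if_neg (by omega), mul_assoc, prod_Icc_one_mul_one_sub]
    simp only [g, show M - (m - 1) = M - m + 1 by omega]
    ring
  have hsum : ∑ i ∈ Icc 1 (M - 1), f i = 0.5 * (1 + F) * y 1 := by
    rw [sum_Icc_one_eq_of_eq_sub (by omega) hf₁ fun i hi hin => hsub i hi (by omega)]
    simp [g, show M - (M - 1) = 1 by omega]
  have hfM : f M = 0.5 * (1 + F) * (1 - y 1) := by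
    rw [hsub M hM le_rfl]
    simp only [g, tsub_self, show M - (M - 1) = 1 by omega, Icc_self, prod_singleton,
      Icc_eq_empty_of_lt zero_lt_one, prod_empty]
    ring
  rw [← sum_div, hsum, hfM]
  ring
end

section
/- Let n ≥ q ≥ 1 and let g: ℝⁿ → ℝ^q be the linear map g(x) = (x₁, …, x_{q−1}, Σ_{j=1}^{q−1} δⱼxⱼ) for signs δ₁, …, δ_{q−1} ∈ {−1,+1}, together with the quadratic perturbation G(x) = (x₁, …, x_{q−1}, Σ_{j=1}^{q−1} δⱼxⱼ + Σ_{j=q}^{n} δⱼxⱼ²). Then in the module ℝ[[x₁, …, xₙ]]^q, the submodule generated by the partial derivatives ∂G/∂x₁, …, ∂G/∂xₙ together with the elements G₁e₁, …, G_qe_q (where Gᵢ is the i-th component of G and e₁,…,e_q is the standard basis) has real codimension 1, the quotient being spanned by the class of e_q. -/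
/-!
Let `m = q - 1` be the index of the quadratic component and `ψ v = v m - ∑_{i < m} δ i v i`.
For `j < m` the column `∂G/∂x_j` is `e j + δ j e m`, for `j ≥ m` it is `2 δ j x_j e m`, and all
`G i e i` vanish at the origin, so `v ↦ (ψ v)(0)` kills `M` while sending `e m` to `1`.
Conversely `x_j • ∂G/∂x_j - G j e j = δ j x_j e m` for `j < m`, so `x_j e m ∈ M` for every `j`;
since the maximal ideal of `ℝ[[x]]` is `(x_1, …, x_n)`, every `f e m` with `f(0) = 0` lies in `M`,
and together with `e j + δ j e m ∈ M` this gives `v - (ψ v)(0) • e m ∈ M` for every `v`.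
-/

section Shear

open Finset

variable {S ι : Type*} [CommRing S] [Fintype ι] [DecidableEq ι] (m : ι) (c : ι → S)

/-- The `m`-th coordinate with respect to the basis `e m`, `e i + c i • e m` (`i ≠ m`). -/
def shearCoord : (ι → S) →ₗ[S] S :=
  LinearMap.proj (R := S) (φ := fun _ : ι => S) m - ∑ i ∈ univ.erase m, c i • LinearMap.proj i

theorem shearCoord_apply (v : ι → S) :
    shearCoord m c v = v m - ∑ i ∈ univ.erase m, c i * v i := by
  simp [shearCoord]

theorem shearCoord_single_self (f : S) : shearCoord m c (Pi.single m f) = f := by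
  rw [shearCoord_apply, Pi.single_eq_same, sub_eq_self]
  exact sum_eq_zero fun i hi => by simp [Pi.single_eq_of_ne (ne_of_mem_erase hi)]

theorem shearCoord_single_add_single {i : ι} (hi : i ≠ m) :
    shearCoord m c (Pi.single i 1 + Pi.single m (c i)) = 0 := by
  rw [map_add, shearCoord_single_self, add_eq_zero_iff_eq_neg, shearCoord_apply,
    Pi.single_eq_of_ne hi.symm, zero_sub, sum_eq_single_of_mem i (mem_erase.2 ⟨hi, mem_univ i⟩)]
  · simp
  · intro k _ hk
    simp [Pi.single_eq_of_ne hk]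

theorem sub_single_shearCoord_eq_sum (v : ι → S) :
    v - Pi.single m (shearCoord m c v) =
      ∑ i ∈ univ.erase m, v i • (Pi.single i 1 + Pi.single m (c i)) := by
  ext k
  rcases eq_or_ne k m with rfl | hk
  · simp only [Pi.sub_apply, Pi.single_eq_same, shearCoord_apply, sub_sub_cancel,
      Finset.sum_apply]
    refine sum_congr rfl fun i hi => ?_
    simp [Pi.single_eq_of_ne (ne_of_mem_erase hi).symm, mul_comm]
  · simp [Pi.single_apply, hk]

end Shear

namespace MvPowerSeries

variable {σ R ι : Type*} [CommRing R]

open Finsupp in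
theorem ker_constantCoeff_eq_span_range_X [Fintype σ] [LinearOrder σ] :
    RingHom.ker (constantCoeff (σ := σ) (R := R)) = Ideal.span (Set.range X) := by
  classical
  refine le_antisymm (fun f hf => ?_) (Ideal.span_le.2 (Set.range_subset_iff.2 fun j => by simp))
  -- the coefficient of `x^d` is assigned to the least variable occurring in `x^d`
  obtain ⟨h, hh⟩ : ∃ h : σ → MvPowerSeries σ R, ∀ j d,
      coeff d (h j) = if ∀ k < j, d k = 0 then coeff (d + single j 1) f else 0 :=
    ⟨fun j d => _, fun _ _ => rfl⟩
  refine Ideal.mem_span_range_iff_exists_fun.2 ⟨h, ?_⟩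
  ext d
  simp only [map_sum, X_def, coeff_mul_monomial, mul_one, hh]
  rcases eq_or_ne d 0 with rfl | hd
  · refine (Finset.sum_eq_zero fun j _ => if_neg ?_).trans (by simpa using hf.symm)
    simp
  obtain ⟨j₀, hj₀d, hj₀min⟩ : ∃ j₀ ∈ d.support, ∀ k ∈ d.support, j₀ ≤ k :=
    ⟨_, d.support.min'_mem (support_nonempty_iff.2 hd), fun k hk => d.support.min'_le k hk⟩
  rw [Finset.sum_eq_single j₀]
  · have hle : single j₀ 1 ≤ d :=
      single_le_iff.2 (Nat.one_le_iff_ne_zero.2 (mem_support_iff.1 hj₀d))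
    rw [if_pos hle, if_pos, tsub_add_cancel_of_le hle]
    intro k hk
    have : d k = 0 := by_contra fun hdk => (hk.trans_le (hj₀min k (mem_support_iff.2 hdk))).false
    simp [this, hk.ne']
  · intro j _ hj
    refine ite_eq_right_iff.2 fun hle => if_neg fun hlow => ?_
    have hj₀j : j₀ < j := (hj₀min j (mem_support_iff.2 (by simp at hle; omega))).lt_of_ne' hj
    simpa [hj.symm, mem_support_iff.1 hj₀d] using hlow j₀ hj₀j
  · simp

variable [DecidableEq ι] {m : ι} {N : Submodule (MvPowerSeries σ R) (ι → MvPowerSeries σ R)}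

theorem single_mem_of_single_C_mul_mem {a : R} (ha : IsUnit a) {f : MvPowerSeries σ R}
    (h : Pi.single m (C a * f) ∈ N) : Pi.single m f ∈ N := by
  rwa [← smul_eq_mul, Pi.single_smul, N.smul_mem_iff_of_isUnit (ha.map C)] at h

theorem single_mem_of_constantCoeff_eq_zero [Fintype σ] [LinearOrder σ]
    (hX : ∀ j, Pi.single m (X j) ∈ N) {f : MvPowerSeries σ R} (hf : constantCoeff f = 0) :
    Pi.single m f ∈ N := by
  have hspan : Ideal.span (Set.range X) ≤ N.comap (LinearMap.single _ _ m) :=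
    Ideal.span_le.2 (Set.range_subset_iff.2 hX)
  exact hspan (ker_constantCoeff_eq_span_range_X.le hf)

theorem sub_constantCoeff_shearCoord_smul_mem [Fintype σ] [LinearOrder σ] [Fintype ι]
    {c : ι → MvPowerSeries σ R} (hX : ∀ j, Pi.single m (X j) ∈ N)
    (hc : ∀ i ≠ m, Pi.single i 1 + Pi.single m (c i) ∈ N) (v : ι → MvPowerSeries σ R) :
    v - (constantCoeff (shearCoord m c v) : R) • (Pi.single m 1 : ι → MvPowerSeries σ R) ∈ N := by
  set a := shearCoord m c v
  have hsplit : v - (constantCoeff a : R) • (Pi.single m 1 : ι → MvPowerSeries σ R) =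
      (v - Pi.single m a) + Pi.single m (a - C (constantCoeff a)) := by
    rw [Pi.single_sub, ← Pi.single_smul', smul_eq_C_mul, mul_one]
    abel
  rw [hsplit, sub_single_shearCoord_eq_sum]
  exact add_mem (Submodule.sum_mem _ fun i hi => N.smul_mem _ (hc i (Finset.ne_of_mem_erase hi)))
    (single_mem_of_constantCoeff_eq_zero hX (by simp))

end MvPowerSeries

section TangentSpace

variable {σ ι R : Type*} [CommRing R] [DecidableEq ι]

noncomputable def pderivColumn (G : ι → MvPolynomial σ R) (j : σ) : ι → MvPowerSeries σ R :=
  fun i => MvPolynomial.pderiv j (G i)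

/-- The extended tangent space `T K[G]_e G`: the diagonal part of the contact group contributes
the vectors `G i • e i`. -/
noncomputable def extTangentSpace (G : ι → MvPolynomial σ R) :
    Submodule (MvPowerSeries σ R) (ι → MvPowerSeries σ R) :=
  Submodule.span _ (Set.range (pderivColumn G) ∪
    Set.range fun i => Pi.single i (G i : MvPowerSeries σ R))

theorem pderivColumn_mem_extTangentSpace (G : ι → MvPolynomial σ R) (j : σ) :
    pderivColumn G j ∈ extTangentSpace G :=
  Submodule.subset_span (Or.inl ⟨j, rfl⟩)

theorem single_mem_extTangentSpace (G : ι → MvPolynomial σ R) (i : ι) :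
    Pi.single i (G i : MvPowerSeries σ R) ∈ extTangentSpace G :=
  Submodule.subset_span (Or.inr ⟨i, rfl⟩)

end TangentSpace

theorem Fin.val_lt_sub_one_iff_ne {q : ℕ} {i m : Fin q} (hm : (m : ℕ) = q - 1) :
    (i : ℕ) < q - 1 ↔ i ≠ m := by
  rw [ne_eq, Fin.ext_iff]
  omega

section FoldGerm

open MvPolynomial

variable {R : Type*} [CommRing R] {n q : ℕ} (hqn : q ≤ n) (δ : Fin n → R)

noncomputable def foldGerm (i : Fin q) : MvPolynomial (Fin n) R :=
  if (i : ℕ) < q - 1 then X (Fin.castLE hqn i)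
  else ∑ j : Fin n, if (j : ℕ) < q - 1 then C (δ j) * X j else C (δ j) * X j ^ 2

theorem constantCoeff_coe_foldGerm (i : Fin q) :
    MvPowerSeries.constantCoeff (foldGerm hqn δ i : MvPowerSeries (Fin n) R) = 0 := by
  rw [← MvPowerSeries.coeff_zero_eq_constantCoeff_apply, coeff_coe, ← constantCoeff_eq]
  unfold foldGerm
  split_ifs <;> simp [apply_ite constantCoeff]

theorem pderiv_foldGerm_of_lt {i : Fin q} (hi : (i : ℕ) < q - 1) (j : Fin n) :
    pderiv j (foldGerm hqn δ i) = if Fin.castLE hqn i = j then 1 else 0 := by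
  simp [foldGerm, hi, Pi.single_apply, eq_comm]

theorem pderiv_foldGerm_of_not_lt {i : Fin q} (hi : ¬(i : ℕ) < q - 1) (j : Fin n) :
    pderiv j (foldGerm hqn δ i) =
      if (j : ℕ) < q - 1 then C (δ j) else C (2 * δ j) * X j := by
  rw [foldGerm, if_neg hi, map_sum, Finset.sum_eq_single j]
  · split_ifs <;> simp [map_ofNat C 2]; ring
  · intro k _ hk
    split_ifs <;> simp [pderiv_X_of_ne hk]
  · simp

variable {m : Fin q} (hm : (m : ℕ) = q - 1)
include hm

theorem pderivColumn_foldGerm_castLE {i : Fin q} (hi : i ≠ m) :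
    pderivColumn (foldGerm hqn δ) (Fin.castLE hqn i) =
      Pi.single i 1 + Pi.single m (MvPowerSeries.C (δ (Fin.castLE hqn i))) := by
  ext1 k
  rcases eq_or_ne k m with rfl | hk
  · rw [pderivColumn, pderiv_foldGerm_of_not_lt hqn δ (by simp [Fin.val_lt_sub_one_iff_ne hm]),
      if_pos (by simpa [Fin.val_lt_sub_one_iff_ne hm])]
    simp [hi.symm]
  · rw [pderivColumn, pderiv_foldGerm_of_lt hqn δ ((Fin.val_lt_sub_one_iff_ne hm).2 hk)]
    rcases eq_or_ne k i with rfl | hki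
    · simp [hk]
    · simp [hki, Pi.single_eq_of_ne hk]

theorem pderivColumn_foldGerm_of_le {j : Fin n} (hj : q - 1 ≤ j) :
    pderivColumn (foldGerm hqn δ) j =
      Pi.single m (MvPowerSeries.C (2 * δ j) * MvPowerSeries.X j) := by
  ext1 k
  rcases eq_or_ne k m with rfl | hk
  · rw [pderivColumn, pderiv_foldGerm_of_not_lt hqn δ (by simp [Fin.val_lt_sub_one_iff_ne hm]),
      if_neg (by omega)]
    simp
  · have hk' := (Fin.val_lt_sub_one_iff_ne hm).2 hk
    rw [pderivColumn, pderiv_foldGerm_of_lt hqn δ hk',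
      if_neg fun h => by simp [Fin.ext_iff] at h; omega]
    simp [hk]

theorem extTangentSpace_foldGerm_le_comap :
    extTangentSpace (foldGerm hqn δ) ≤
      Submodule.comap (shearCoord m fun i => MvPowerSeries.C (δ (Fin.castLE hqn i)))
        (RingHom.ker MvPowerSeries.constantCoeff) := by
  rw [extTangentSpace, Submodule.span_le]
  rintro _ (⟨j, rfl⟩ | ⟨i, rfl⟩) <;> rw [SetLike.mem_coe, Submodule.mem_comap, RingHom.mem_ker]
  · rcases lt_or_ge (j : ℕ) (q - 1) with hj | hj
    · have hij : Fin.castLE hqn ⟨j, by omega⟩ = j := rfl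
      rw [← hij, pderivColumn_foldGerm_castLE hqn δ hm ((Fin.val_lt_sub_one_iff_ne hm).1 hj),
        shearCoord_single_add_single _ _ ((Fin.val_lt_sub_one_iff_ne hm).1 hj), map_zero]
    · rw [pderivColumn_foldGerm_of_le hqn δ hm hj, shearCoord_single_self]
      simp
  · beta_reduce
    rw [← mul_one (foldGerm hqn δ i : MvPowerSeries (Fin n) R), ← smul_eq_mul, Pi.single_smul,
      map_smul, smul_eq_mul, map_mul, constantCoeff_coe_foldGerm, zero_mul]

theorem single_X_mem_extTangentSpace_foldGerm (hδ : ∀ j, IsUnit (2 * δ j)) (j : Fin n) :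
    Pi.single m (MvPowerSeries.X j) ∈ extTangentSpace (foldGerm hqn δ) := by
  have hcol := pderivColumn_mem_extTangentSpace (foldGerm hqn δ) j
  rcases lt_or_ge (j : ℕ) (q - 1) with hj | hj
  · set i : Fin q := ⟨j, by omega⟩
    have hij : Fin.castLE hqn i = j := rfl
    have hGi := single_mem_extTangentSpace (foldGerm hqn δ) i
    rw [foldGerm, if_pos hj, hij, coe_X] at hGi
    rw [← hij, pderivColumn_foldGerm_castLE hqn δ hm ((Fin.val_lt_sub_one_iff_ne hm).1 hj),
      hij] at hcol
    refine MvPowerSeries.single_mem_of_single_C_mul_mem (isUnit_of_mul_isUnit_right (hδ j)) ?_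
    have hsplit : Pi.single m (MvPowerSeries.C (δ j) * MvPowerSeries.X j) =
        (MvPowerSeries.X j : MvPowerSeries (Fin n) R) •
          (Pi.single i 1 + Pi.single m (MvPowerSeries.C (δ j)) : Fin q → MvPowerSeries (Fin n) R) -
          (Pi.single i (MvPowerSeries.X j) : Fin q → MvPowerSeries (Fin n) R) := by
      rw [smul_add, ← Pi.single_smul, ← Pi.single_smul, smul_eq_mul, smul_eq_mul, mul_one,
        mul_comm]
      abel
    rw [hsplit]
    exact sub_mem (Submodule.smul_mem _ _ hcol) hGi
  · rw [pderivColumn_foldGerm_of_le hqn δ hm hj] at hcol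
    exact MvPowerSeries.single_mem_of_single_C_mul_mem (hδ j) hcol

end FoldGerm

theorem stmt19 (n q : ℕ) (hq : 1 ≤ q) (hqn : q ≤ n)
    (δ : Fin n → ℝ) (hδ : ∀ j, δ j = 1 ∨ δ j = -1)
    (G : Fin q → MvPolynomial (Fin n) ℝ)
    (hG : ∀ i : Fin q, G i =
      if (i : ℕ) < q - 1 then MvPolynomial.X (Fin.castLE hqn i)
      else ∑ j : Fin n,
        if (j : ℕ) < q - 1 then MvPolynomial.C (δ j) * MvPolynomial.X j
        else MvPolynomial.C (δ j) * MvPolynomial.X j ^ 2)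
    (M : Submodule (MvPowerSeries (Fin n) ℝ) (Fin q → MvPowerSeries (Fin n) ℝ))
    (hM : M = Submodule.span (MvPowerSeries (Fin n) ℝ)
      ((Set.range fun j : Fin n => fun i : Fin q =>
          ((MvPolynomial.pderiv j (G i) : MvPolynomial (Fin n) ℝ) :
            MvPowerSeries (Fin n) ℝ)) ∪
        (Set.range fun i : Fin q =>
          Pi.single i ((G i : MvPowerSeries (Fin n) ℝ))))) :
    Submodule.Quotient.mk (p := M)
        (Pi.single (⟨q - 1, by omega⟩ : Fin q) (1 : MvPowerSeries (Fin n) ℝ)) ≠ 0 ∧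
    ∀ v : (Fin q → MvPowerSeries (Fin n) ℝ) ⧸ M,
      ∃ c : ℝ, v = c • Submodule.Quotient.mk (p := M)
        (Pi.single (⟨q - 1, by omega⟩ : Fin q) (1 : MvPowerSeries (Fin n) ℝ)) := by
  obtain rfl : G = foldGerm hqn δ := funext hG
  subst hM
  set m : Fin q := ⟨q - 1, by omega⟩
  have hm : (m : ℕ) = q - 1 := rfl
  have hδ₂ : ∀ j, IsUnit (2 * δ j) := fun j => by rcases hδ j with h | h <;> simp [h]
  have hcoord := MvPowerSeries.sub_constantCoeff_shearCoord_smul_mem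
    (single_X_mem_extTangentSpace_foldGerm hqn δ hm hδ₂) fun i hi => by
      simpa [pderivColumn_foldGerm_castLE hqn δ hm hi] using
        pderivColumn_mem_extTangentSpace (foldGerm hqn δ) (Fin.castLE hqn i)
  refine ⟨fun h => ?_, fun v => ?_⟩
  · have := extTangentSpace_foldGerm_le_comap hqn δ hm ((Submodule.Quotient.mk_eq_zero _).1 h)
    simp [shearCoord_single_self] at this
  · obtain ⟨v, rfl⟩ := Submodule.Quotient.mk_surjective _ v
    exact ⟨_, (Submodule.Quotient.eq _).2 (hcoord v) |>.trans (Submodule.Quotient.mk_smul _ _ _)⟩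
end
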